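/- arXiv:1808.06705 — 3 statements merged into one kernel-verified Lean document; each statement's English description precedes it below -/
import Mathlib

section
/- The label propagation algorithm terminates with every vertex in a connected component assigned the minimum vertex label of that component, i.e., it correctly computes the connected components of G. -/
/-- One step of edge replacement: label propagation `(v,u) ↦ (u, L v)` when `u ≠ L v`,
symmetrization `(v,u) ↦ (u,v)` when `u = L v`. -/
def stepEdges (L : ℕ → ℕ) (E : Multiset (ℕ × ℕ)) : Multiset (ℕ × ℕ) :=
  E.map (fun e => if e.2 = L e.1 then (e.2, e.1) else (e.2, L e.1))

/-- One step of label update: `L' u = min (L u) (min of L v over edges (v,u) with u ≠ L v)`. -/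
def stepLabels (L : ℕ → ℕ) (E : Multiset (ℕ × ℕ)) : ℕ → ℕ :=
  fun u =>
    ((E.filter (fun e => e.2 = u ∧ e.2 ≠ L e.1)).map (fun e => L e.1)).fold min (L u)

/-- One full step of the label propagation algorithm. -/
def lpStep (s : Multiset (ℕ × ℕ) × (ℕ → ℕ)) : Multiset (ℕ × ℕ) × (ℕ → ℕ) :=
  (stepEdges s.2 s.1, stepLabels s.2 s.1)

/-- Initial labels: the minimum of the closed neighborhood of `v`. -/
def initLabels (E₀ : Finset (ℕ × ℕ)) (v : ℕ) : ℕ :=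
  (insert v ((E₀.filter (fun e => e.1 = v)).image Prod.snd)).min' (Finset.insert_nonempty _ _)

/-- The state (edge multiset, label array) after `k` steps of the algorithm on
initial (directed) edge set `E₀`. -/
def lpRun (E₀ : Finset (ℕ × ℕ)) (k : ℕ) : Multiset (ℕ × ℕ) × (ℕ → ℕ) :=
  lpStep^[k] (E₀.val, initLabels E₀)

/-- Undirected connectivity via the edges of a directed edge multiset. -/
def EdgeConn (E : Multiset (ℕ × ℕ)) (v u : ℕ) : Prop :=
  Relation.ReflTransGen (fun a b => (a, b) ∈ E ∨ (b, a) ∈ E) v u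

/-- `E₀` is symmetric (both orientations of each undirected edge are present). -/
def IsSym (E₀ : Finset (ℕ × ℕ)) : Prop := ∀ v u : ℕ, (v, u) ∈ E₀ → (u, v) ∈ E₀

/-- `E₀` has no loop edges. -/
def Loopless (E₀ : Finset (ℕ × ℕ)) : Prop := ∀ v : ℕ, (v, v) ∉ E₀


/-!
Labels only decrease, and only vertices occurring in `E₀` ever change their label, so the label
arrays stabilise. Every edge of every round, and every pair `v, L v`, stays inside one component
of `E₀`, so no label drops below the minimum of its component. Conversely connectivity is never
lost: when an edge `(v, u)` is replaced by `(u, L v)`, the edges of the next round still join `v`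
to `L v` (strong induction on `v`, using the invariant `LabelSupported`). Once the labels are stable, propagation forces `L u ≤ L v` along every edge
`(v, u)` with `u ≠ L v`, and symmetrization supplies the reversed edges, so `L` is constant on
edges, hence on components; with `L v ≤ v` this makes `L v` the minimum of the component.
-/

namespace Multiset

variable {α : Type*} [LinearOrder α]

theorem fold_min_le_iff {s : Multiset α} {a b : α} :
    s.fold min a ≤ b ↔ a ≤ b ∨ ∃ x ∈ s, x ≤ b := by
  induction s using Multiset.induction_on with
  | empty => simp
  | cons x s ih => simp [fold_cons_left, ih, or_left_comm]

theorem fold_min_eq_or (s : Multiset α) (a : α) : s.fold min a = a ∨ s.fold min a ∈ s := by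
  induction s using Multiset.induction_on with
  | empty => simp
  | cons x s ih =>
    rw [fold_cons_left]
    rcases min_choice x (s.fold min a) with h | h <;> rw [h]
    · exact Or.inr (mem_cons_self _ _)
    · exact ih.imp_right (mem_cons_of_mem ·)

end Multiset

namespace EdgeConn

variable {E : Multiset (ℕ × ℕ)} {a b c : ℕ}

theorem refl (E : Multiset (ℕ × ℕ)) (a : ℕ) : EdgeConn E a a := Relation.ReflTransGen.refl

theorem of_mem (h : (a, b) ∈ E) : EdgeConn E a b := Relation.ReflTransGen.single (Or.inl h)

theorem trans (hab : EdgeConn E a b) (hbc : EdgeConn E b c) : EdgeConn E a c :=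
  Relation.ReflTransGen.trans hab hbc

theorem symm (h : EdgeConn E a b) : EdgeConn E b a := by
  induction h with
  | refl => exact refl E a
  | tail _ hbc ih => exact Relation.ReflTransGen.head hbc.symm ih

theorem equivalence (E : Multiset (ℕ × ℕ)) : Equivalence (EdgeConn E) :=
  ⟨refl E, symm, trans⟩

theorem lift {r : ℕ → ℕ → Prop} (hr : Equivalence r) (hE : ∀ a b, (a, b) ∈ E → r a b)
    (h : EdgeConn E a b) : r a b := by
  induction h with
  | refl => exact hr.refl a
  | tail _ hbc ih => exact hr.trans ih (hbc.elim (hE _ _) fun hcb => hr.symm (hE _ _ hcb))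

end EdgeConn

section Step

variable {L : ℕ → ℕ} {E : Multiset (ℕ × ℕ)} {v u : ℕ}

theorem stepLabels_le_self (L : ℕ → ℕ) (E : Multiset (ℕ × ℕ)) (u : ℕ) :
    stepLabels L E u ≤ L u :=
  Multiset.fold_min_le_iff.2 (Or.inl le_rfl)

theorem stepLabels_le_of_mem (h : (v, u) ∈ E) (hu : u ≠ L v) : stepLabels L E u ≤ L v :=
  Multiset.fold_min_le_iff.2 <| Or.inr
    ⟨L v, Multiset.mem_map_of_mem _ (Multiset.mem_filter.2 ⟨h, rfl, hu⟩), le_rfl⟩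

theorem stepLabels_eq_or (L : ℕ → ℕ) (E : Multiset (ℕ × ℕ)) (u : ℕ) :
    stepLabels L E u = L u ∨ ∃ v, (v, u) ∈ E ∧ u ≠ L v ∧ stepLabels L E u = L v := by
  refine (Multiset.fold_min_eq_or _ _).imp_right fun h => ?_
  obtain ⟨⟨v, w⟩, hmem, hv⟩ := Multiset.mem_map.1 h
  obtain ⟨hvw, rfl, hne⟩ := Multiset.mem_filter.1 hmem
  exact ⟨v, hvw, hne, hv.symm⟩

theorem swap_mem_stepEdges (h : (v, u) ∈ E) (hu : u = L v) : (u, v) ∈ stepEdges L E :=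
  Multiset.mem_map.2 ⟨(v, u), h, by simp [hu]⟩

theorem mem_stepEdges_of_ne (h : (v, u) ∈ E) (hu : u ≠ L v) : (u, L v) ∈ stepEdges L E :=
  Multiset.mem_map.2 ⟨(v, u), h, by simp [hu]⟩

theorem exists_of_mem_stepEdges {e : ℕ × ℕ} (he : e ∈ stepEdges L E) :
    ∃ v u, (v, u) ∈ E ∧ (u = L v ∧ e = (u, v) ∨ u ≠ L v ∧ e = (u, L v)) := by
  obtain ⟨⟨v, u⟩, hvu, rfl⟩ := Multiset.mem_map.1 he
  refine ⟨v, u, hvu, ?_⟩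
  by_cases hu : u = L v <;> simp [hu]

theorem rel_of_mem_stepEdges {C : ℕ → ℕ → Prop} (hC : Equivalence C)
    (hE : ∀ e ∈ E, C e.1 e.2) (hL : ∀ v, C v (L v)) {e : ℕ × ℕ} (he : e ∈ stepEdges L E) :
    C e.1 e.2 := by
  obtain ⟨v, u, hvu, ⟨-, rfl⟩ | ⟨-, rfl⟩⟩ := exists_of_mem_stepEdges he
  · exact hC.symm (hE _ hvu)
  · exact hC.trans (hC.symm (hE _ hvu)) (hL v)

theorem rel_stepLabels {C : ℕ → ℕ → Prop} (hC : Equivalence C)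
    (hE : ∀ e ∈ E, C e.1 e.2) (hL : ∀ v, C v (L v)) (u : ℕ) : C u (stepLabels L E u) := by
  rcases stepLabels_eq_or L E u with h | ⟨v, hvu, -, h⟩ <;> rw [h]
  · exact hL u
  · exact hC.trans (hC.symm (hE _ hvu)) (hL v)

theorem le_of_mem_stepEdges {N : ℕ} (hle : ∀ v, L v ≤ v) (hE : ∀ e ∈ E, e.1 ≤ N ∧ e.2 ≤ N)
    {e : ℕ × ℕ} (he : e ∈ stepEdges L E) : e.1 ≤ N ∧ e.2 ≤ N := by
  obtain ⟨v, u, hvu, ⟨-, rfl⟩ | ⟨-, rfl⟩⟩ := exists_of_mem_stepEdges he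
  · exact (hE _ hvu).symm
  · exact ⟨(hE _ hvu).2, (hle v).trans (hE _ hvu).1⟩

theorem stepLabels_eq_self_of_lt {N : ℕ} (hE : ∀ e ∈ E, e.2 ≤ N) (hu : N < u) :
    stepLabels L E u = L u := by
  rcases stepLabels_eq_or L E u with h | ⟨v, hvu, -, -⟩
  · exact h
  · exact absurd (hE _ hvu) (not_le.2 hu)

/-- The invariant of the run that keeps `v` joined to `L v` by the edges of the next round. -/
def LabelSupported (E : Multiset (ℕ × ℕ)) (L : ℕ → ℕ) (v : ℕ) : Prop :=
  L v = v ∨ (v, L v) ∈ E ∨ (L v, v) ∈ E ∨ ∃ w, (w, v) ∈ E ∧ L w = L v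

theorem labelSupported_step (hle : ∀ v, L v ≤ v) (hs : ∀ v, LabelSupported E L v) (v : ℕ) :
    LabelSupported (stepEdges L E) (stepLabels L E) v := by
  rcases stepLabels_eq_or L E v with hv | ⟨w, hwv, hne, hv⟩
  · by_cases hfix : L v = v
    · exact Or.inl (hv.trans hfix)
    rw [LabelSupported, hv]
    rcases hs v with hfix' | hout | hin | ⟨w, hwv, hw⟩
    · exact absurd hfix' hfix
    · exact Or.inr (Or.inr (Or.inl (swap_mem_stepEdges hout rfl)))
    · have hne : v ≠ L (L v) := by have := hle (L v); have := hle v; omega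
      have hidem : L (L v) = L v :=
        le_antisymm (hle _) (hv.symm.trans_le (stepLabels_le_of_mem hin hne))
      exact Or.inr (Or.inl (hidem ▸ mem_stepEdges_of_ne hin hne))
    · exact Or.inr (Or.inl (hw ▸ mem_stepEdges_of_ne hwv (hw ▸ Ne.symm hfix)))
  · exact Or.inr (Or.inl (hv ▸ mem_stepEdges_of_ne hwv hne))

theorem edgeConn_label_step (hle : ∀ v, L v ≤ v) (hs : ∀ v, LabelSupported E L v) (v : ℕ) :
    EdgeConn (stepEdges L E) v (L v) := by
  induction v using Nat.strong_induction_on with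
  | _ v ih =>
  by_cases hfix : L v = v
  · rw [hfix]; exact .refl _ v
  rcases hs v with hfix' | hout | hin | ⟨w, hwv, hw⟩
  · exact absurd hfix' hfix
  · exact (EdgeConn.of_mem (swap_mem_stepEdges hout rfl)).symm
  · have hne : v ≠ L (L v) := by have := hle (L v); have := hle v; omega
    exact (EdgeConn.of_mem (mem_stepEdges_of_ne hin hne)).trans
      (ih _ ((hle v).lt_of_ne hfix)).symm
  · exact hw ▸ EdgeConn.of_mem (mem_stepEdges_of_ne hwv (hw ▸ Ne.symm hfix))

theorem EdgeConn.step (hle : ∀ v, L v ≤ v) (hs : ∀ v, LabelSupported E L v) {a b : ℕ}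
    (h : EdgeConn E a b) : EdgeConn (stepEdges L E) a b := by
  refine h.lift (EdgeConn.equivalence _) fun v u hvu => ?_
  by_cases hu : u = L v
  · exact (EdgeConn.of_mem (swap_mem_stepEdges hvu hu)).symm
  · exact (edgeConn_label_step hle hs v).trans (EdgeConn.of_mem (mem_stepEdges_of_ne hvu hu)).symm

end Step

section Stable

variable {L : ℕ → ℕ} {E : ℕ → Multiset (ℕ × ℕ)}

theorem label_le_of_mem_of_stable (hL : ∀ k, stepLabels L (E k) = L) {k v u : ℕ}
    (h : (v, u) ∈ E k) (hu : u ≠ L v) : L u ≤ L v :=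
  (congrFun (hL k) u).symm.trans_le (stepLabels_le_of_mem h hu)

theorem exists_mem_of_stable (hE : ∀ k, E (k + 1) = stepEdges L (E k)) {v : ℕ}
    (hs : LabelSupported (E 0) L v) (hv : L v ≠ v) : ∃ k, (L v, v) ∈ E k := by
  rcases hs with hfix | hout | hin | ⟨w, hwv, hw⟩
  · exact absurd hfix hv
  · exact ⟨1, hE 0 ▸ swap_mem_stepEdges hout rfl⟩
  · exact ⟨0, hin⟩
  · have hout : (v, L v) ∈ E 1 := hE 0 ▸ hw ▸ mem_stepEdges_of_ne hwv (hw ▸ Ne.symm hv)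
    exact ⟨2, hE 1 ▸ swap_mem_stepEdges hout rfl⟩

theorem label_label_of_stable (hE : ∀ k, E (k + 1) = stepEdges L (E k))
    (hL : ∀ k, stepLabels L (E k) = L) (hle : ∀ v, L v ≤ v)
    (hs : ∀ v, LabelSupported (E 0) L v) (v : ℕ) : L (L v) = L v := by
  refine le_antisymm (hle _) ?_
  by_cases hfix : L v = v
  · rw [hfix, hfix]
  obtain ⟨k, hk⟩ := exists_mem_of_stable hE (hs v) hfix
  have hne : v ≠ L (L v) := by have := hle (L v); have := hle v; omega
  exact label_le_of_mem_of_stable hL hk hne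

theorem label_eq_of_mem_of_stable (hE : ∀ k, E (k + 1) = stepEdges L (E k))
    (hL : ∀ k, stepLabels L (E k) = L) (hle : ∀ v, L v ≤ v)
    (hs : ∀ v, LabelSupported (E 0) L v) {k v u : ℕ} (h : (v, u) ∈ E k) : L v = L u := by
  have hidem := label_label_of_stable hE hL hle hs
  by_cases hu : u = L v
  · rw [hu, hidem]
  by_contra hne
  have hout : (u, L v) ∈ E (k + 1) := hE k ▸ mem_stepEdges_of_ne h hu
  have hvu : L v ≤ L u := hidem v ▸ label_le_of_mem_of_stable hL hout hne
  exact hne (le_antisymm hvu (label_le_of_mem_of_stable hL h hu))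

theorem label_eq_of_edgeConn_of_stable (hE : ∀ k, E (k + 1) = stepEdges L (E k))
    (hL : ∀ k, stepLabels L (E k) = L) (hle : ∀ v, L v ≤ v)
    (hs : ∀ v, LabelSupported (E 0) L v) {a b : ℕ} (h : EdgeConn (E 0) a b) : L a = L b :=
  h.lift (r := fun a b => L a = L b) ⟨fun _ => rfl, Eq.symm, Eq.trans⟩
    fun _ _ hab => label_eq_of_mem_of_stable hE hL hle hs hab

end Stable

section Run

variable (E₀ : Finset (ℕ × ℕ))

def lpEdges (k : ℕ) : Multiset (ℕ × ℕ) := (lpRun E₀ k).1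

def lpLabels (k : ℕ) : ℕ → ℕ := (lpRun E₀ k).2

theorem lpEdges_succ (k : ℕ) :
    lpEdges E₀ (k + 1) = stepEdges (lpLabels E₀ k) (lpEdges E₀ k) := by
  simp only [lpEdges, lpLabels, lpRun, Function.iterate_succ_apply', lpStep]

theorem lpLabels_succ (k : ℕ) :
    lpLabels E₀ (k + 1) = stepLabels (lpLabels E₀ k) (lpEdges E₀ k) := by
  simp only [lpEdges, lpLabels, lpRun, Function.iterate_succ_apply', lpStep]

theorem lpLabels_le_self (k v : ℕ) : lpLabels E₀ k v ≤ v := by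
  induction k with
  | zero => exact Finset.min'_le _ _ (Finset.mem_insert_self _ _)
  | succ k ih => exact lpLabels_succ E₀ k ▸ (stepLabels_le_self _ _ v).trans ih

theorem initLabels_eq_or (v : ℕ) : initLabels E₀ v = v ∨ (v, initLabels E₀ v) ∈ E₀ := by
  have hmem : initLabels E₀ v ∈ insert v ((E₀.filter (fun e => e.1 = v)).image Prod.snd) :=
    Finset.min'_mem _ _
  refine (Finset.mem_insert.1 hmem).imp_right fun h => ?_
  obtain ⟨⟨w, u⟩, hwu, hu⟩ := Finset.mem_image.1 h
  obtain ⟨hwu, rfl⟩ := Finset.mem_filter.1 hwu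
  rwa [← hu]

theorem labelSupported_lpRun (k v : ℕ) : LabelSupported (lpEdges E₀ k) (lpLabels E₀ k) v := by
  induction k generalizing v with
  | zero => exact (initLabels_eq_or E₀ v).imp_right Or.inl
  | succ k ih =>
    rw [lpEdges_succ, lpLabels_succ]
    exact labelSupported_step (lpLabels_le_self E₀ k) ih v

theorem EdgeConn.to_lpEdges {a b : ℕ} (h : EdgeConn E₀.val a b) (k : ℕ) :
    EdgeConn (lpEdges E₀ k) a b := by
  induction k with
  | zero => exact h
  | succ k ih =>
    rw [lpEdges_succ]
    exact ih.step (lpLabels_le_self E₀ k) (labelSupported_lpRun E₀ k)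

theorem edgeConn_lpRun (k : ℕ) :
    (∀ e ∈ lpEdges E₀ k, EdgeConn E₀.val e.1 e.2) ∧ ∀ v, EdgeConn E₀.val v (lpLabels E₀ k v) := by
  induction k with
  | zero =>
    refine ⟨fun e he => EdgeConn.of_mem he, fun v => ?_⟩
    rcases initLabels_eq_or E₀ v with h | h
    · change EdgeConn _ v (initLabels E₀ v)
      rw [h]
      exact EdgeConn.refl _ v
    · exact EdgeConn.of_mem h
  | succ k ih =>
    rw [lpEdges_succ, lpLabels_succ]
    exact ⟨fun _ he => rel_of_mem_stepEdges (EdgeConn.equivalence _) ih.1 ih.2 he,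
      rel_stepLabels (EdgeConn.equivalence _) ih.1 ih.2⟩

theorem le_of_mem_lpEdges {N : ℕ} (hN : ∀ e ∈ E₀, e.1 ≤ N ∧ e.2 ≤ N) (k : ℕ) :
    ∀ e ∈ lpEdges E₀ k, e.1 ≤ N ∧ e.2 ≤ N := by
  induction k with
  | zero => exact hN
  | succ k ih =>
    rw [lpEdges_succ]
    exact fun _ he => le_of_mem_stepEdges (lpLabels_le_self E₀ k) ih he

theorem lpLabels_eq_self_of_lt {N : ℕ} (hN : ∀ e ∈ E₀, e.1 ≤ N ∧ e.2 ≤ N) {v : ℕ} (hv : N < v)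
    (k : ℕ) : lpLabels E₀ k v = v := by
  induction k with
  | zero =>
    exact (initLabels_eq_or E₀ v).resolve_right fun h => absurd (hN _ h).1 (not_le.2 hv)
  | succ k ih =>
    rw [lpLabels_succ, stepLabels_eq_self_of_lt (fun e he => (le_of_mem_lpEdges E₀ hN k e he).2) hv, ih]

theorem exists_lpLabels_stable : ∃ K, ∀ k, K ≤ k → lpLabels E₀ k = lpLabels E₀ K := by
  obtain ⟨N, hN⟩ : ∃ N, ∀ e ∈ E₀, e.1 ≤ N ∧ e.2 ≤ N :=
    ⟨E₀.sup fun e => max e.1 e.2, fun e he =>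
      max_le_iff.1 (Finset.le_sup (f := fun e : ℕ × ℕ => max e.1 e.2) he)⟩
  -- only the finitely many vertices `≤ N` ever change their label
  have hanti : Antitone fun k (v : Fin (N + 1)) => lpLabels E₀ k v :=
    antitone_nat_of_succ_le fun k v => lpLabels_succ E₀ k ▸ stepLabels_le_self _ _ _
  obtain ⟨K, hK⟩ := WellFoundedLT.antitone_chain_condition hanti
  refine ⟨K, fun k hk => funext fun v => ?_⟩
  by_cases hv : v ≤ N
  · exact (congrFun (hK k hk) ⟨v, Nat.lt_succ_of_le hv⟩).symm
  · rw [lpLabels_eq_self_of_lt E₀ hN (not_le.1 hv), lpLabels_eq_self_of_lt E₀ hN (not_le.1 hv)]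

theorem lpLabels_eq_of_edgeConn {K : ℕ} (hK : ∀ k, K ≤ k → lpLabels E₀ k = lpLabels E₀ K)
    {a b : ℕ} (h : EdgeConn E₀.val a b) : lpLabels E₀ K a = lpLabels E₀ K b := by
  refine label_eq_of_edgeConn_of_stable (E := fun k => lpEdges E₀ (K + k)) (fun k => ?_)
    (fun k => ?_) (lpLabels_le_self E₀ K) (labelSupported_lpRun E₀ K) (h.to_lpEdges E₀ K)
  · rw [← add_assoc, lpEdges_succ, hK _ (Nat.le_add_right K k)]
  · have hstep := lpLabels_succ E₀ (K + k)
    rw [hK (K + k + 1) (by omega), hK (K + k) (by omega)] at hstep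
    exact hstep.symm

end Run

theorem lp_correctness_general
    (E₀ : Finset (ℕ × ℕ)) :
    ∃ K : ℕ, (∀ k : ℕ, K ≤ k → (lpRun E₀ k).2 = (lpRun E₀ K).2) ∧
      ∀ v : ℕ, (lpRun E₀ K).2 v = sInf {u : ℕ | EdgeConn E₀.val v u} := by
  obtain ⟨K, hK⟩ := exists_lpLabels_stable E₀
  refine ⟨K, hK, fun v => le_antisymm ?_ ?_⟩
  · exact le_csInf ⟨v, EdgeConn.refl _ v⟩ fun u hu =>
      (lpLabels_eq_of_edgeConn E₀ hK hu).trans_le (lpLabels_le_self E₀ K u)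
  · exact Nat.sInf_le ((edgeConn_lpRun E₀ K).2 v)

/-- The label propagation algorithm terminates (the label arrays
stabilize) with every vertex assigned the minimum vertex label of its connected
component, i.e. it correctly computes the connected components of `G`. -/
theorem lp_correctness
    (E₀ : Finset (ℕ × ℕ)) (hsym : IsSym E₀) (hloop : Loopless E₀) :
    ∃ K : ℕ, (∀ k : ℕ, K ≤ k → (lpRun E₀ k).2 = (lpRun E₀ K).2) ∧
      ∀ v : ℕ, (lpRun E₀ K).2 v = sInf {u : ℕ | EdgeConn E₀.val v u} :=
  lp_correctness_general E₀
end

section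
/- On any path graph with 4 vertices (with arbitrary distinct labels), the label propagation algorithm converges to a star rooted at the minimum-labeled vertex in at most three steps. -/
open Finset

def IsRelabeling (f : ℕ → ℕ) (s t : Multiset (ℕ × ℕ) × (ℕ → ℕ)) : Prop :=
  t.1 = s.1.map (Prod.map f f) ∧ ∀ v, t.2 (f v) = f (s.2 v)

def IsStarAt (s : Multiset (ℕ × ℕ) × (ℕ → ℕ)) (V : Finset ℕ) (C : ℕ) : Prop :=
  (∀ v ∈ V, s.2 v = C) ∧ ∀ e ∈ s.1, e.1 = C ∨ e.2 = C

instance (s : Multiset (ℕ × ℕ) × (ℕ → ℕ)) (V : Finset ℕ) (C : ℕ) :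
    Decidable (IsStarAt s V C) :=
  inferInstanceAs (Decidable (_ ∧ _))

def pathEdges (a b c d : ℕ) : Finset (ℕ × ℕ) :=
  {(a, b), (b, a), (b, c), (c, b), (c, d), (d, c)}

theorem isStarAt_lpRun_pathEdges_three_of_lt_four :
    ∀ a < 4, ∀ b < 4, ∀ c < 4, ∀ d < 4, [a, b, c, d].Nodup →
      IsStarAt (lpRun (pathEdges a b c d) 3) {a, b, c, d} (min (min a b) (min c d)) := by
  decide

theorem Finset.exists_strictMono_image_range (s : Finset ℕ) :
    ∃ f : ℕ → ℕ, StrictMono f ∧ (range #s).image f = s := by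
  set g := s.orderEmbOfFin rfl
  refine ⟨fun n => if h : n < #s then g ⟨n, h⟩ else s.sup id + n, ?_, ?_⟩
  · refine strictMono_nat_of_lt_succ fun n => ?_
    by_cases hn : n + 1 < #s
    · simp only [hn, Nat.lt_of_succ_lt hn, dite_true]
      exact g.lt_iff_lt.2 (Fin.mk_lt_mk.2 n.lt_succ_self)
    · simp only [hn, dite_false]
      split_ifs
      · exact (le_sup (f := id) (s.orderEmbOfFin_mem rfl _)).trans_lt (by omega)
      · omega
  · ext x
    simp only [mem_image, mem_range]
    constructor
    · rintro ⟨n, hn, rfl⟩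
      rw [dif_pos hn]
      exact s.orderEmbOfFin_mem rfl _
    · intro hx
      obtain ⟨i, rfl⟩ : x ∈ Set.range g := by rwa [range_orderEmbOfFin]
      exact ⟨i, i.isLt, by simp⟩

section Relabeling

variable {f : ℕ → ℕ}

theorem stepEdges_map (hf : f.Injective) {L L' : ℕ → ℕ} (hL : ∀ v, L' (f v) = f (L v))
    (E : Multiset (ℕ × ℕ)) :
    stepEdges L' (E.map (Prod.map f f)) = (stepEdges L E).map (Prod.map f f) := by
  simp only [stepEdges, Multiset.map_map]
  refine Multiset.map_congr rfl fun e _ => ?_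
  simp only [Function.comp_apply, Prod.map_fst, Prod.map_snd, hL, hf.eq_iff]
  split_ifs <;> rfl

theorem stepLabels_map (hf : StrictMono f) {L L' : ℕ → ℕ} (hL : ∀ v, L' (f v) = f (L v))
    (E : Multiset (ℕ × ℕ)) (v : ℕ) :
    stepLabels L' (E.map (Prod.map f f)) (f v) = f (stepLabels L E v) := by
  simp only [stepLabels, Multiset.filter_map, Multiset.map_map]
  rw [← Multiset.fold_hom min fun x y => hf.monotone.map_min, Multiset.map_map, hL]
  congr 2
  · ext e
    simp [hL]
  · exact Multiset.filter_congr fun e _ => by simp [hL, hf.injective.eq_iff]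

theorem IsRelabeling.lpStep (hf : StrictMono f) {s t : Multiset (ℕ × ℕ) × (ℕ → ℕ)}
    (h : IsRelabeling f s t) : IsRelabeling f (lpStep s) (lpStep t) := by
  obtain ⟨hE, hL⟩ := h
  refine ⟨?_, fun v => ?_⟩
  · show stepEdges t.2 t.1 = (stepEdges s.2 s.1).map _
    rw [hE, stepEdges_map hf.injective hL]
  · show stepLabels t.2 t.1 (f v) = f (stepLabels s.2 s.1 v)
    rw [hE, stepLabels_map hf hL]

theorem initLabels_image (hf : StrictMono f) (E₀ : Finset (ℕ × ℕ)) (v : ℕ) :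
    initLabels (E₀.image (Prod.map f f)) (f v) = f (initLabels E₀ v) := by
  have hnbhd : insert (f v) (((E₀.image (Prod.map f f)).filter (·.1 = f v)).image Prod.snd)
      = (insert v ((E₀.filter (·.1 = v)).image Prod.snd)).image f := by
    simp [filter_image, image_image, image_insert, hf.injective.eq_iff, Function.comp_def]
  simp only [initLabels, hnbhd]
  exact min'_image hf.monotone _ _

theorem isRelabeling_lpRun (hf : StrictMono f) (E₀ : Finset (ℕ × ℕ)) (k : ℕ) :
    IsRelabeling f (lpRun E₀ k) (lpRun (E₀.image (Prod.map f f)) k) := by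
  induction k with
  | zero =>
    exact ⟨image_val_of_injOn (hf.injective.prodMap hf.injective).injOn,
      initLabels_image hf E₀⟩
  | succ k ih =>
    simpa only [lpRun, Function.iterate_succ_apply'] using ih.lpStep hf

theorem IsStarAt.image (hf : f.Injective) {s t : Multiset (ℕ × ℕ) × (ℕ → ℕ)}
    (h : IsRelabeling f s t) {V : Finset ℕ} {C : ℕ} (hs : IsStarAt s V C) :
    IsStarAt t (V.image f) (f C) := by
  obtain ⟨hE, hL⟩ := h
  refine ⟨?_, ?_⟩
  · simp only [forall_mem_image, hL]
    exact fun v hv => congrArg f (hs.1 v hv)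
  · simp only [hE, Multiset.forall_mem_map_iff, Prod.map_fst, Prod.map_snd, hf.eq_iff]
    exact hs.2

end Relabeling

/-- On any path graph with 4 vertices `a - b - c - d` (arbitrary distinct
labels), the label propagation algorithm converges in at most three steps to a star rooted
at the minimum-labeled vertex: after 3 steps every vertex holds the component minimum `C`
and every remaining edge is incident to `C`. -/
theorem lp_four_path_three_steps
    (a b c d : ℕ) (hab : a ≠ b) (hac : a ≠ c) (had : a ≠ d)
    (hbc : b ≠ c) (hbd : b ≠ d) (hcd : c ≠ d) :
    let E₀ : Finset (ℕ × ℕ) := {(a, b), (b, a), (b, c), (c, b), (c, d), (d, c)}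
    let C : ℕ := min (min a b) (min c d)
    (∀ v ∈ ({a, b, c, d} : Finset ℕ), (lpRun E₀ 3).2 v = C) ∧
      ∀ e ∈ (lpRun E₀ 3).1, e.1 = C ∨ e.2 = C := by
  obtain ⟨f, hf, hs⟩ := ({a, b, c, d} : Finset ℕ).exists_strictMono_image_range
  have hpre : ∀ x ∈ ({a, b, c, d} : Finset ℕ), ∃ i < 4, f i = x := fun x hx => by
    rw [← hs] at hx
    obtain ⟨i, hi, rfl⟩ := mem_image.1 hx
    exact ⟨i, (mem_range.1 hi).trans_le card_le_four, rfl⟩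
  obtain ⟨a', ha', rfl⟩ := hpre a (by simp)
  obtain ⟨b', hb', rfl⟩ := hpre b (by simp)
  obtain ⟨c', hc', rfl⟩ := hpre c (by simp)
  obtain ⟨d', hd', rfl⟩ := hpre d (by simp)
  have hnodup : [a', b', c', d'].Nodup :=
    List.Nodup.of_map f (by simp [hab, hac, had, hbc, hbd, hcd])
  have hstar := (isStarAt_lpRun_pathEdges_three_of_lt_four a' ha' b' hb' c' hc' d' hd'
    hnodup).image hf.injective (isRelabeling_lpRun hf _ 3)
  simp only [pathEdges, image_insert, image_singleton, Prod.map_apply,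
    hf.monotone.map_min] at hstar
  exact hstar
end

section
/- In the label propagation algorithm, if at some step vertex v holds minimum label l(v) with l(v) ≠ v, then at that step or the previous step an edge between v and l(v) (in one of the two orientations) exists in the edge multiset. -/
lemma fold_min_le (s : Multiset ℕ) (b : ℕ) : s.fold min b ≤ b := by
  induction s using Multiset.induction with
  | empty => simp
  | cons a s ih =>
    rw [Multiset.fold_cons_left]
    exact le_trans (min_le_right _ _) ih

lemma fold_min_le_of_mem {s : Multiset ℕ} {x : ℕ} (b : ℕ) (hx : x ∈ s) :
    s.fold min b ≤ x := by
  induction s using Multiset.induction with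
  | empty => simp at hx
  | cons a s ih =>
    rw [Multiset.fold_cons_left]
    rcases Multiset.mem_cons.1 hx with h | h
    · subst h; exact min_le_left _ _
    · exact le_trans (min_le_right _ _) (ih h)

lemma fold_min_cases (s : Multiset ℕ) (b : ℕ) :
    s.fold min b = b ∨ s.fold min b ∈ s := by
  induction s using Multiset.induction with
  | empty => simp
  | cons a s ih =>
    rw [Multiset.fold_cons_left]
    rcases min_cases a (s.fold min b) with ⟨h, _⟩ | ⟨h, _⟩
    · right; rw [h]; exact Multiset.mem_cons_self _ _
    · rw [h]
      rcases ih with h' | h'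
      · left; exact h'
      · right; exact Multiset.mem_cons_of_mem h'

lemma lpRun_succ (E₀ : Finset (ℕ × ℕ)) (k : ℕ) :
    lpRun E₀ (k + 1) = lpStep (lpRun E₀ k) := by
  simp [lpRun, Function.iterate_succ_apply']

lemma lp_label_le (E₀ : Finset (ℕ × ℕ)) (k v : ℕ) : (lpRun E₀ k).2 v ≤ v := by
  induction k with
  | zero =>
    simp only [lpRun, Function.iterate_zero, id_eq]
    exact Finset.min'_le _ _ (Finset.mem_insert_self _ _)
  | succ k ih =>
    rw [lpRun_succ]
    exact le_trans (fold_min_le _ _) ih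

lemma lp_key (E₀ : Finset (ℕ × ℕ)) (k v : ℕ) (hne : (lpRun E₀ k).2 v ≠ v) :
    (v, (lpRun E₀ k).2 v) ∈ (lpRun E₀ k).1 ∨
      ((lpRun E₀ k).2 v, v) ∈ (lpRun E₀ k).1 := by
  induction k generalizing v with
  | zero =>
    simp only [lpRun, Function.iterate_zero, id_eq] at hne ⊢
    have hmem := Finset.min'_mem
      (insert v ((E₀.filter (fun e => e.1 = v)).image Prod.snd))
      (Finset.insert_nonempty _ _)
    rcases Finset.mem_insert.1 hmem with h | h
    · exact absurd h hne
    · rcases Finset.mem_image.1 h with ⟨e, he, h2⟩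
      rcases Finset.mem_filter.1 he with ⟨heE, h1⟩
      left
      have : e = (v, initLabels E₀ v) := by
        cases e; simp_all [initLabels]
      rwa [this] at heE
  | succ k ih =>
    rw [lpRun_succ] at hne ⊢
    set s := lpRun E₀ k with hs
    set L := s.2 with hL
    set E := s.1 with hE
    have hL' : (lpStep s).2 v =
        ((E.filter (fun e => e.2 = v ∧ e.2 ≠ L e.1)).map (fun e => L e.1)).fold min (L v) := rfl
    have hE' : (lpStep s).1 = E.map (fun e => if e.2 = L e.1 then (e.2, e.1) else (e.2, L e.1)) := rfl
    rcases fold_min_cases ((E.filter (fun e => e.2 = v ∧ e.2 ≠ L e.1)).map (fun e => L e.1)) (L v)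
      with heq | hmem
    · -- label unchanged
      have hlv : (lpStep s).2 v = L v := by rw [hL', heq]
      rw [hlv] at hne ⊢
      rcases ih v hne with h | h
      · -- (v, L v) ∈ E, symmetrizes to (L v, v)
        right
        rw [hE']
        refine Multiset.mem_map.2 ⟨(v, L v), h, ?_⟩
        simp
      · -- (L v, v) ∈ E
        by_cases hc : v = L (L v)
        · left
          rw [hE']
          refine Multiset.mem_map.2 ⟨(L v, v), h, ?_⟩
          simp [← hc]
        · -- edge (L v, v) is in the filter, forcing L (L v) = L v
          have hfil : (L v, v) ∈ E.filter (fun e => e.2 = v ∧ e.2 ≠ L e.1) := by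
            refine Multiset.mem_filter.2 ⟨h, ?_⟩
            exact ⟨rfl, hc⟩
          have hmm : L (L v) ∈ (E.filter (fun e => e.2 = v ∧ e.2 ≠ L e.1)).map
              (fun e => L e.1) := Multiset.mem_map.2 ⟨(L v, v), hfil, rfl⟩
          have h1 : L v ≤ L (L v) := by
            calc L v = _ := heq.symm
            _ ≤ L (L v) := fold_min_le_of_mem _ hmm
          have h2 : L (L v) ≤ L v := by
            exact lp_label_le E₀ k (L v)
          have h3 : L (L v) = L v := le_antisymm h2 h1
          left
          rw [hE']
          refine Multiset.mem_map.2 ⟨(L v, v), h, ?_⟩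
          simp [if_neg hc, h3]
    · -- label acquired via an edge this step
      rcases Multiset.mem_map.1 hmem with ⟨e, hef, h2⟩
      rcases Multiset.mem_filter.1 hef with ⟨heE, h3, h4⟩
      left
      rw [hE', hL']
      refine Multiset.mem_map.2 ⟨e, heE, ?_⟩
      rw [if_neg h4, h3, h2]

/-- If at some step `k` a vertex `v` holds a minimum label
`l(v) ≠ v`, then at that step or at the previous step an edge between `v` and `l(v)`
(in one of the two orientations) exists in the edge multiset. -/
theorem lp_edge_to_min_label_exists
    (E₀ : Finset (ℕ × ℕ)) (hsym : IsSym E₀) (hloop : Loopless E₀)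
    (k v : ℕ) (hne : (lpRun E₀ k).2 v ≠ v) :
    ((v, (lpRun E₀ k).2 v) ∈ (lpRun E₀ k).1 ∨
        ((lpRun E₀ k).2 v, v) ∈ (lpRun E₀ k).1) ∨
      (1 ≤ k ∧
        ((v, (lpRun E₀ k).2 v) ∈ (lpRun E₀ (k - 1)).1 ∨
          ((lpRun E₀ k).2 v, v) ∈ (lpRun E₀ (k - 1)).1)) := by
  exact Or.inl (lp_key E₀ k v hne)
end
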